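/- Let d ≥ 1, δ ≥ 0 and 1 < p⁻ ≤ p⁺ < ∞. There exists a constant c ≥ 1, depending only on d, p⁻, p⁺ and δ, such that for every exponent p ∈ [p⁻, p⁺] and all matrices A, B ∈ ℝ^{d×d}: c⁻¹ |F_p(A) − F_p(B)|² ≤ (S_p(A) − S_p(B)) : (A − B) ≤ c |F_p(A) − F_p(B)|². -/

import Mathlib

open MeasureTheory

/-- The symmetric part `A^sym := ½(A + Aᵀ)`. -/
noncomputable def msym {d : ℕ} (A : Matrix (Fin d) (Fin d) ℝ) : Matrix (Fin d) (Fin d) ℝ :=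
  (2 : ℝ)⁻¹ • (A + A.transpose)

/-- The Frobenius norm of a matrix. -/
noncomputable def frob {d : ℕ} (A : Matrix (Fin d) (Fin d) ℝ) : ℝ :=
  Real.sqrt (∑ i, ∑ j, (A i j) ^ 2)

/-- The Frobenius inner product `A : B`. -/
noncomputable def finner {d : ℕ} (A B : Matrix (Fin d) (Fin d) ℝ) : ℝ :=
  ∑ i, ∑ j, A i j * B i j

/-- `S_p(A) := (δ+|A^sym|)^{p−2} A^sym`. -/
noncomputable def Smap {d : ℕ} (δ p : ℝ) (A : Matrix (Fin d) (Fin d) ℝ) :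
    Matrix (Fin d) (Fin d) ℝ :=
  ((δ + frob (msym A)) ^ (p - 2)) • msym A

/-- `F_p(A) := (δ+|A^sym|)^{(p−2)/2} A^sym`. -/
noncomputable def Fmap {d : ℕ} (δ p : ℝ) (A : Matrix (Fin d) (Fin d) ℝ) :
    Matrix (Fin d) (Fin d) ℝ :=
  ((δ + frob (msym A)) ^ ((p - 2) / 2)) • msym A

/-!
Write `a = A^sym`, `b = B^sym`, `s = |a|`, `t = |b|`, `w = a : b`, `q = (p - 2) / 2`,
`G = (δ + s)^q` and `H = (δ + t)^q`. Then `(S_p(A) - S_p(B)) : (A - B) = G²s² + H²t² - (G² + H²)w`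
and `|F_p(A) - F_p(B)|² = G²s² + H²t² - 2GHw` differ by `(G - H)²w`, and for `|w| ≤ st` both are
at least `L = (s - t)(sG² - tH²)`, the value of the first at `w = st`. So everything reduces to
the scalar inequality `st(G - H)² ≤ C L`. For `s ≤ 2t` it follows from the mean value theorem for
`r ↦ (δ + r)^q` and `r ↦ r(δ + r)^{2q}`, whose derivative is comparable to `(δ + r)^{2q}` because
`2q + 1 = p - 1 > 0`; for `s ≥ 2t` it holds because `r ↦ r(δ + r)^{2q}` grows at least like
`r^{min(1, p - 1)}`, so that `L` is comparable to `s²G²`.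
-/

open Real Set

lemma rpow_le_two_rpow_abs_mul_rpow {x y : ℝ} (e : ℝ) (hx : 0 < x) (hy : 0 < y)
    (hxy : x ≤ 2 * y) (hyx : y ≤ 2 * x) : x ^ e ≤ 2 ^ |e| * y ^ e := by
  have hratio : (x / y) ^ e ≤ 2 ^ |e| := by
    rcases le_or_gt 0 e with he | he
    · rw [abs_of_nonneg he]
      exact rpow_le_rpow (by positivity) ((div_le_iff₀ hy).2 hxy) he
    · rw [abs_of_neg he, rpow_neg zero_le_two, ← inv_rpow zero_le_two]
      exact rpow_le_rpow_of_nonpos (by positivity) ((le_div_iff₀ hy).2 (by linarith)) he.le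
  calc x ^ e = (x / y) ^ e * y ^ e := by
        rw [div_rpow hx.le hy.le, div_mul_cancel₀ _ (rpow_pos_of_pos hy e).ne']
    _ ≤ 2 ^ |e| * y ^ e := by gcongr

lemma exists_sub_eq_mul_sub_of_hasDerivAt {f f' : ℝ → ℝ} {t s : ℝ} (hts : t < s)
    (hf : ∀ x ∈ Icc t s, HasDerivAt f (f' x) x) :
    ∃ ξ ∈ Ioo t s, f s - f t = f' ξ * (s - t) := by
  obtain ⟨ξ, hξ, hslope⟩ := exists_hasDerivAt_eq_slope f f' hts
    (fun x hx => (hf x hx).continuousAt.continuousWithinAt)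
    (fun x hx => hf x (Ioo_subset_Icc_self hx))
  refine ⟨ξ, hξ, ?_⟩
  rw [hslope, div_mul_cancel₀ _ (sub_ne_zero.2 hts.ne')]

lemma hasDerivAt_add_rpow_const (δ q : ℝ) {x : ℝ} (hx : 0 < δ + x) :
    HasDerivAt (fun r => (δ + r) ^ q) (q * (δ + x) ^ (q - 1)) x := by
  simpa using ((hasDerivAt_id x).const_add δ).rpow_const (p := q) (Or.inl hx.ne')

lemma hasDerivAt_mul_add_rpow_const (δ e : ℝ) {x : ℝ} (hx : 0 < δ + x) :
    HasDerivAt (fun r => r * (δ + r) ^ e) ((δ + x) ^ (e - 1) * (δ + (e + 1) * x)) x := by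
  have hsplit : (δ + x) ^ e = (δ + x) ^ (e - 1) * (δ + x) := by
    rw [← rpow_add_one hx.ne', sub_add_cancel]
  refine ((hasDerivAt_id x).mul (hasDerivAt_add_rpow_const δ e hx)).congr_deriv ?_
  rw [id_eq, hsplit]
  ring

lemma mul_add_rpow_le_div_rpow_mul {δ e m t s : ℝ} (hδ : 0 ≤ δ) (ht : 0 < t) (hts : t ≤ s)
    (hm1 : m ≤ 1) (hme : m ≤ e + 1) :
    t * (δ + t) ^ e ≤ (t / s) ^ m * (s * (δ + s) ^ e) := by
  have hs : 0 < s := ht.trans_le hts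
  have hts' : t / s ≤ 1 := (div_le_one hs).2 hts
  have hts0 : 0 < t / s := div_pos ht hs
  rcases le_or_gt 0 e with he | he
  · calc t * (δ + t) ^ e ≤ t * (δ + s) ^ e := by gcongr
      _ = (t / s) ^ (1 : ℝ) * (s * (δ + s) ^ e) := by rw [rpow_one]; field_simp
      _ ≤ (t / s) ^ m * (s * (δ + s) ^ e) :=
        mul_le_mul_of_nonneg_right (rpow_le_rpow_of_exponent_ge hts0 hts' hm1) (by positivity)
  · have hshrink : t / s * (δ + s) ≤ δ + t := by
      rw [div_mul_eq_mul_div, div_le_iff₀ hs]; nlinarith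
    calc t * (δ + t) ^ e ≤ t * (t / s * (δ + s)) ^ e :=
          mul_le_mul_of_nonneg_left (rpow_le_rpow_of_nonpos (by positivity) hshrink he.le) ht.le
      _ = (t / s) ^ (e + 1) * (s * (δ + s) ^ e) := by
          rw [mul_rpow hts0.le (by positivity), rpow_add_one hts0.ne']; field_simp
      _ ≤ (t / s) ^ m * (s * (δ + s) ^ e) :=
        mul_le_mul_of_nonneg_right (rpow_le_rpow_of_exponent_ge hts0 hts' hme) (by positivity)

lemma monotoneOn_mul_add_rpow {δ e : ℝ} (hδ : 0 ≤ δ) (he : -1 ≤ e) :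
    MonotoneOn (fun r => r * (δ + r) ^ e) (Ici 0) := by
  intro t ht s hs hts
  rcases (mem_Ici.1 ht).eq_or_lt with rfl | ht
  · simp only [zero_mul]
    exact mul_nonneg hs (rpow_nonneg (by linarith [mem_Ici.1 hs]) e)
  · simpa using mul_add_rpow_le_div_rpow_mul (m := 0) hδ ht hts zero_le_one (by linarith)

lemma rpow_sq_eq_rpow_two_mul {x : ℝ} (hx : 0 ≤ x) (q : ℝ) : (x ^ q) ^ 2 = x ^ (2 * q) := by
  rw [← rpow_natCast, ← rpow_mul hx, Nat.cast_ofNat, mul_comm]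

noncomputable def comparisonConst (B κ : ℝ) : ℝ :=
  max (2 * B ^ 2 * 2 ^ (2 * B) / κ) (4 / (1 - 2 ^ (-κ)))

lemma comparisonConst_nonneg {B κ : ℝ} (hκ : 0 < κ) : 0 ≤ comparisonConst B κ :=
  le_max_of_le_right <| div_nonneg zero_le_four <|
    sub_nonneg.2 (rpow_le_one_of_one_le_of_nonpos one_le_two (by linarith))

section Scalar

variable {δ q κ B s t : ℝ}

lemma mul_sq_sub_rpow_le_of_le_two_mul (hδ : 0 ≤ δ) (hκ1 : κ ≤ 1) (hκq : κ ≤ 2 * q + 1)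
    (hκ : 0 < κ) (ht : 0 < t) (hts : t < s) (hst : s ≤ 2 * t) :
    s * t * ((δ + s) ^ q - (δ + t) ^ q) ^ 2 ≤
      2 * q ^ 2 * 2 ^ |2 * q| / κ * ((s - t) * (s * (δ + s) ^ (2 * q) - t * (δ + t) ^ (2 * q))) := by
  obtain ⟨ξ, ⟨hξt, hξs⟩, hG⟩ := exists_sub_eq_mul_sub_of_hasDerivAt hts
    fun x hx => hasDerivAt_add_rpow_const δ q (x := x) (by linarith [hx.1])
  obtain ⟨η, ⟨hηt, hηs⟩, hφ⟩ := exists_sub_eq_mul_sub_of_hasDerivAt hts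
    fun x hx => hasDerivAt_mul_add_rpow_const δ (2 * q) (x := x) (by linarith [hx.1])
  have hξ : 0 < δ + ξ := by linarith
  have hη : 0 < δ + η := by linarith
  have hst_le : s * t ≤ 2 * (δ + ξ) ^ 2 := by nlinarith
  have hξ_pow : ((δ + ξ) ^ (q - 1)) ^ 2 * (δ + ξ) ^ 2 = (δ + ξ) ^ (2 * q) := by
    rw [← mul_pow, ← rpow_add_one hξ.ne', sub_add_cancel, rpow_sq_eq_rpow_two_mul hξ.le]
  have hratio : (δ + ξ) ^ (2 * q) ≤ 2 ^ |2 * q| * (δ + η) ^ (2 * q) :=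
    rpow_le_two_rpow_abs_mul_rpow _ hξ hη (by linarith) (by linarith)
  have hderiv : κ * (δ + η) ^ (2 * q) ≤ (δ + η) ^ (2 * q - 1) * (δ + (2 * q + 1) * η) := by
    have hsplit : (δ + η) ^ (2 * q) = (δ + η) ^ (2 * q - 1) * (δ + η) := by
      rw [← rpow_add_one hη.ne', sub_add_cancel]
    rw [hsplit, mul_left_comm]
    gcongr
    nlinarith
  calc s * t * ((δ + s) ^ q - (δ + t) ^ q) ^ 2
      = q ^ 2 * (s * t) * ((δ + ξ) ^ (q - 1)) ^ 2 * (s - t) ^ 2 := by rw [hG]; ring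
    _ ≤ q ^ 2 * (2 * (δ + ξ) ^ 2) * ((δ + ξ) ^ (q - 1)) ^ 2 * (s - t) ^ 2 := by gcongr
    _ = 2 * q ^ 2 * (δ + ξ) ^ (2 * q) * (s - t) ^ 2 := by rw [← hξ_pow]; ring
    _ ≤ 2 * q ^ 2 * (2 ^ |2 * q| * (δ + η) ^ (2 * q)) * (s - t) ^ 2 := by gcongr
    _ = 2 * q ^ 2 * 2 ^ |2 * q| / κ * (κ * (δ + η) ^ (2 * q)) * (s - t) ^ 2 := by
      field_simp
    _ ≤ 2 * q ^ 2 * 2 ^ |2 * q| / κ * ((δ + η) ^ (2 * q - 1) * (δ + (2 * q + 1) * η)) *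
        (s - t) ^ 2 := by gcongr
    _ = _ := by rw [hφ]; ring

lemma mul_sq_sub_rpow_le_of_two_mul_le (hδ : 0 ≤ δ) (hκ1 : κ ≤ 1) (hκq : κ ≤ 2 * q + 1)
    (hκ : 0 < κ) (ht : 0 < t) (hts : 2 * t ≤ s) :
    s * t * ((δ + s) ^ q - (δ + t) ^ q) ^ 2 ≤
      4 / (1 - 2 ^ (-κ)) * ((s - t) * (s * (δ + s) ^ (2 * q) - t * (δ + t) ^ (2 * q))) := by
  have hs : 0 < s := by linarith
  have hK : (2 : ℝ) ^ (-κ) < 1 := rpow_lt_one_of_one_lt_of_neg one_lt_two (by linarith)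
  set Φ := s * (δ + s) ^ (2 * q)
  have hΦ : 0 ≤ Φ := by positivity
  have hcontract : t * (δ + t) ^ (2 * q) ≤ 2 ^ (-κ) * Φ := by
    refine (mul_add_rpow_le_div_rpow_mul (s := s) hδ ht (by linarith) hκ1 (by linarith)).trans ?_
    gcongr
    rw [rpow_neg zero_le_two, ← inv_rpow zero_le_two]
    exact rpow_le_rpow (by positivity) ((div_le_iff₀ hs).2 (by linarith)) hκ.le
  have hupper : s * t * ((δ + s) ^ q - (δ + t) ^ q) ^ 2 ≤ 2 * s * Φ := by
    have hG := rpow_nonneg (by linarith : 0 ≤ δ + s) q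
    have hH := rpow_nonneg (by linarith : 0 ≤ δ + t) q
    calc s * t * ((δ + s) ^ q - (δ + t) ^ q) ^ 2
        ≤ s * (t * ((δ + s) ^ q) ^ 2 + t * ((δ + t) ^ q) ^ 2) := by
          linarith [mul_nonneg (mul_nonneg hs.le ht.le) (mul_nonneg hG hH)]
      _ ≤ s * (Φ + Φ) := by
          rw [rpow_sq_eq_rpow_two_mul (by linarith) q, rpow_sq_eq_rpow_two_mul (by linarith) q]
          gcongr
          · exact mul_le_mul_of_nonneg_right (by linarith) (by positivity)
          · exact hcontract.trans (mul_le_of_le_one_left hΦ hK.le)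
      _ = 2 * s * Φ := by ring
  have hlower : s / 2 * ((1 - 2 ^ (-κ)) * Φ) ≤
      (s - t) * (Φ - t * (δ + t) ^ (2 * q)) :=
    mul_le_mul (by linarith) (by linarith) (mul_nonneg (by linarith) hΦ) (by linarith)
  calc s * t * ((δ + s) ^ q - (δ + t) ^ q) ^ 2 ≤ 2 * s * Φ := hupper
    _ = 4 / (1 - 2 ^ (-κ)) * (s / 2 * ((1 - 2 ^ (-κ)) * Φ)) := by
      field_simp [(sub_pos.2 hK).ne']
      ring
    _ ≤ _ := by gcongr

lemma mul_sq_sub_rpow_le_of_le (hδ : 0 ≤ δ) (hqB : |q| ≤ B) (hκ1 : κ ≤ 1)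
    (hκq : κ ≤ 2 * q + 1) (hκ : 0 < κ) (ht : 0 ≤ t) (hts : t ≤ s) :
    s * t * ((δ + s) ^ q - (δ + t) ^ q) ^ 2 ≤ comparisonConst B κ *
      ((s - t) * (s * (δ + s) ^ (2 * q) - t * (δ + t) ^ (2 * q))) := by
  have hR : 0 ≤ (s - t) * (s * (δ + s) ^ (2 * q) - t * (δ + t) ^ (2 * q)) :=
    mul_nonneg (sub_nonneg.2 hts) <| sub_nonneg.2 <|
      monotoneOn_mul_add_rpow hδ (by linarith) ht (ht.trans hts) hts
  rcases ht.eq_or_lt with rfl | ht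
  · simpa using mul_nonneg (comparisonConst_nonneg hκ) hR
  rcases hts.eq_or_lt with rfl | hts
  · simp
  rcases le_or_gt s (2 * t) with hnear | hfar
  · refine (mul_sq_sub_rpow_le_of_le_two_mul hδ hκ1 hκq hκ ht hts hnear).trans ?_
    refine mul_le_mul_of_nonneg_right (le_max_of_le_left ?_) hR
    have hq2 : q ^ 2 ≤ B ^ 2 := sq_le_sq' (abs_le.1 hqB).1 (abs_le.1 hqB).2
    have hpow : (2 : ℝ) ^ |2 * q| ≤ 2 ^ (2 * B) := by
      refine rpow_le_rpow_of_exponent_le one_le_two ?_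
      rw [abs_mul, abs_two]; linarith
    gcongr
  · exact (mul_sq_sub_rpow_le_of_two_mul_le hδ hκ1 hκq hκ ht hfar.le).trans
      (mul_le_mul_of_nonneg_right (le_max_right _ _) hR)

lemma mul_sq_sub_rpow_le (hδ : 0 ≤ δ) (hqB : |q| ≤ B) (hκ1 : κ ≤ 1)
    (hκq : κ ≤ 2 * q + 1) (hκ : 0 < κ) (hs : 0 ≤ s) (ht : 0 ≤ t) :
    s * t * ((δ + s) ^ q - (δ + t) ^ q) ^ 2 ≤ comparisonConst B κ *
      ((s - t) * (s * (δ + s) ^ (2 * q) - t * (δ + t) ^ (2 * q))) := by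
  rcases le_total t s with hts | hst
  · exact mul_sq_sub_rpow_le_of_le hδ hqB hκ1 hκq hκ ht hts
  · convert mul_sq_sub_rpow_le_of_le hδ hqB hκ1 hκq hκ hs hst using 1 <;> ring

end Scalar

lemma inv_mul_le_and_le_mul_of_abs_sub_le {X Y L C : ℝ} (hC : 0 ≤ C) (hXY : |Y - X| ≤ C * L)
    (hLX : L ≤ X) (hLY : L ≤ Y) : (1 + C)⁻¹ * Y ≤ X ∧ X ≤ (1 + C) * Y := by
  obtain ⟨h₁, h₂⟩ := abs_le.1 hXY
  refine ⟨(inv_mul_le_iff₀ (by linarith)).2 ?_, ?_⟩ <;> nlinarith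

section InnerProductSpace

variable {E : Type*} [NormedAddCommGroup E] [InnerProductSpace ℝ E]

noncomputable def shiftedRpowSMul (δ e : ℝ) (a : E) : E := (δ + ‖a‖) ^ e • a

lemma inner_shiftedRpowSMul_comparable {δ q κ B : ℝ} (hδ : 0 ≤ δ) (hqB : |q| ≤ B)
    (hκ1 : κ ≤ 1) (hκq : κ ≤ 2 * q + 1) (hκ : 0 < κ) (a b : E) :
    (1 + comparisonConst B κ)⁻¹ * ‖shiftedRpowSMul δ q a - shiftedRpowSMul δ q b‖ ^ 2 ≤
        inner ℝ (shiftedRpowSMul δ (2 * q) a - shiftedRpowSMul δ (2 * q) b) (a - b) ∧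
      inner ℝ (shiftedRpowSMul δ (2 * q) a - shiftedRpowSMul δ (2 * q) b) (a - b) ≤
        (1 + comparisonConst B κ) * ‖shiftedRpowSMul δ q a - shiftedRpowSMul δ q b‖ ^ 2 := by
  simp only [shiftedRpowSMul]
  set s := ‖a‖
  set t := ‖b‖
  set w := inner ℝ a b
  set G := (δ + s) ^ q
  set H := (δ + t) ^ q
  have hs : 0 ≤ s := norm_nonneg a
  have ht : 0 ≤ t := norm_nonneg b
  have hG : 0 ≤ G := rpow_nonneg (by linarith) q
  have hH : 0 ≤ H := rpow_nonneg (by linarith) q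
  have hG2 : (δ + s) ^ (2 * q) = G ^ 2 := (rpow_sq_eq_rpow_two_mul (by linarith) q).symm
  have hH2 : (δ + t) ^ (2 * q) = H ^ 2 := (rpow_sq_eq_rpow_two_mul (by linarith) q).symm
  have hw : |w| ≤ s * t := abs_real_inner_le_norm a b
  have hwst : w ≤ s * t := (le_abs_self w).trans hw
  have hX : inner ℝ ((δ + s) ^ (2 * q) • a - (δ + t) ^ (2 * q) • b) (a - b) =
      G ^ 2 * s ^ 2 + H ^ 2 * t ^ 2 - (G ^ 2 + H ^ 2) * w := by
    simp only [inner_sub_left, inner_sub_right, real_inner_smul_left, real_inner_self_eq_norm_sq,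
      real_inner_comm a b, hG2, hH2]
    ring
  have hY : ‖G • a - H • b‖ ^ 2 = G ^ 2 * s ^ 2 + H ^ 2 * t ^ 2 - 2 * G * H * w := by
    rw [norm_sub_sq_real]
    simp only [norm_smul, real_inner_smul_left, real_inner_smul_right, Real.norm_eq_abs,
      abs_of_nonneg hG, abs_of_nonneg hH]
    ring
  have hkey := mul_sq_sub_rpow_le hδ hqB hκ1 hκq hκ hs ht
  rw [hG2, hH2] at hkey
  rw [hX, hY]
  refine inv_mul_le_and_le_mul_of_abs_sub_le (comparisonConst_nonneg hκ) ?_ ?_ ?_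
    (L := (s - t) * (s * G ^ 2 - t * H ^ 2))
  · calc |G ^ 2 * s ^ 2 + H ^ 2 * t ^ 2 - 2 * G * H * w -
          (G ^ 2 * s ^ 2 + H ^ 2 * t ^ 2 - (G ^ 2 + H ^ 2) * w)|
        = |(G - H) ^ 2 * w| := by ring_nf
      _ = (G - H) ^ 2 * |w| := by rw [abs_mul, abs_of_nonneg (sq_nonneg _)]
      _ ≤ (G - H) ^ 2 * (s * t) := by gcongr
      _ ≤ _ := by linarith
  · linarith [mul_nonneg (add_nonneg (sq_nonneg G) (sq_nonneg H)) (sub_nonneg.2 hwst)]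
  · linarith [mul_nonneg (mul_nonneg hG hH) (sub_nonneg.2 hwst),
      mul_nonneg (mul_nonneg hs ht) (sq_nonneg (G - H))]

theorem exists_inner_shiftedRpowSMul_comparable {δ pm : ℝ} (pp : ℝ) (hδ : 0 ≤ δ) (hpm : 1 < pm) :
    ∃ c : ℝ, 1 ≤ c ∧ ∀ p : ℝ, pm ≤ p → p ≤ pp → ∀ a b : E,
      c⁻¹ * ‖shiftedRpowSMul δ ((p - 2) / 2) a - shiftedRpowSMul δ ((p - 2) / 2) b‖ ^ 2 ≤
          inner ℝ (shiftedRpowSMul δ (p - 2) a - shiftedRpowSMul δ (p - 2) b) (a - b) ∧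
      inner ℝ (shiftedRpowSMul δ (p - 2) a - shiftedRpowSMul δ (p - 2) b) (a - b) ≤
          c * ‖shiftedRpowSMul δ ((p - 2) / 2) a - shiftedRpowSMul δ ((p - 2) / 2) b‖ ^ 2 := by
  set B := max |(pm - 2) / 2| |(pp - 2) / 2|
  set κ := min 1 (pm - 1)
  have hκ : 0 < κ := lt_min one_pos (by linarith)
  refine ⟨1 + comparisonConst B κ, le_add_of_nonneg_right (comparisonConst_nonneg hκ), ?_⟩
  intro p hpm_le hle_pp a b
  have hqB : |(p - 2) / 2| ≤ B := abs_le_max_abs_abs (by linarith) (by linarith)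
  have hκq : κ ≤ 2 * ((p - 2) / 2) + 1 := (min_le_right _ _).trans (by linarith)
  have h := inner_shiftedRpowSMul_comparable hδ hqB (min_le_left _ _) hκq hκ a b
  rwa [mul_div_cancel₀ _ two_ne_zero] at h

end InnerProductSpace

section Matrix

open scoped Matrix

variable {d : ℕ}

noncomputable def frobVec (d : ℕ) :
    Matrix (Fin d) (Fin d) ℝ →ₗ[ℝ] EuclideanSpace ℝ (Fin d × Fin d) where
  toFun A := WithLp.toLp 2 fun ij => A ij.1 ij.2
  map_add' _ _ := rfl
  map_smul' _ _ := rfl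

lemma frobVec_apply (A : Matrix (Fin d) (Fin d) ℝ) (ij : Fin d × Fin d) :
    (frobVec d A).ofLp ij = A ij.1 ij.2 := rfl

lemma frob_eq_norm_frobVec (A : Matrix (Fin d) (Fin d) ℝ) : frob A = ‖frobVec d A‖ := by
  simp [frob, EuclideanSpace.norm_eq, frobVec_apply, Fintype.sum_prod_type]

lemma finner_eq_inner_frobVec (A B : Matrix (Fin d) (Fin d) ℝ) :
    finner A B = inner ℝ (frobVec d A) (frobVec d B) := by
  simp [finner, PiLp.inner_apply, frobVec_apply, Fintype.sum_prod_type, mul_comm]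

lemma finner_transpose_right (C M : Matrix (Fin d) (Fin d) ℝ) : finner C Mᵀ = finner Cᵀ M := by
  simp only [finner, Matrix.transpose_apply]
  exact Finset.sum_comm

lemma finner_msym_right_of_transpose_eq {C : Matrix (Fin d) (Fin d) ℝ} (hC : Cᵀ = C)
    (M : Matrix (Fin d) (Fin d) ℝ) : finner C (msym M) = finner C M := by
  have hMt : finner C Mᵀ = finner C M := by rw [finner_transpose_right, hC]
  simp only [finner_eq_inner_frobVec, msym, map_smul, map_add, inner_add_right,
    real_inner_smul_right] at hMt ⊢
  rw [hMt]
  ring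

lemma msym_sub (A B : Matrix (Fin d) (Fin d) ℝ) : msym (A - B) = msym A - msym B := by
  simp only [msym, Matrix.transpose_sub, ← smul_sub]
  congr 1
  abel

lemma transpose_msym (A : Matrix (Fin d) (Fin d) ℝ) : (msym A)ᵀ = msym A := by
  rw [msym, Matrix.transpose_smul, Matrix.transpose_add, Matrix.transpose_transpose, add_comm]

lemma finner_Smap_sub_eq_finner_msym_sub (δ p : ℝ) (A B : Matrix (Fin d) (Fin d) ℝ) :
    finner (Smap δ p A - Smap δ p B) (A - B) =
      finner (Smap δ p A - Smap δ p B) (msym A - msym B) := by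
  rw [← msym_sub, finner_msym_right_of_transpose_eq]
  simp only [Smap, Matrix.transpose_sub, Matrix.transpose_smul, transpose_msym]

lemma frobVec_Smap (δ p : ℝ) (A : Matrix (Fin d) (Fin d) ℝ) :
    frobVec d (Smap δ p A) = shiftedRpowSMul δ (p - 2) (frobVec d (msym A)) := by
  rw [Smap, map_smul, frob_eq_norm_frobVec, shiftedRpowSMul]

lemma frobVec_Fmap (δ p : ℝ) (A : Matrix (Fin d) (Fin d) ℝ) :
    frobVec d (Fmap δ p A) = shiftedRpowSMul δ ((p - 2) / 2) (frobVec d (msym A)) := by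
  rw [Fmap, map_smul, frob_eq_norm_frobVec, shiftedRpowSMul]

end Matrix

theorem stmt4_general (d : ℕ) (δ pm pp : ℝ) (hδ : 0 ≤ δ) (hpm : 1 < pm) :
    ∃ c : ℝ, 1 ≤ c ∧ ∀ p : ℝ, pm ≤ p → p ≤ pp → ∀ A B : Matrix (Fin d) (Fin d) ℝ,
      c⁻¹ * frob (Fmap δ p A - Fmap δ p B) ^ 2 ≤
          finner (Smap δ p A - Smap δ p B) (A - B) ∧
      finner (Smap δ p A - Smap δ p B) (A - B) ≤
          c * frob (Fmap δ p A - Fmap δ p B) ^ 2 := by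
  obtain ⟨c, hc, hcomp⟩ :=
    exists_inner_shiftedRpowSMul_comparable (E := EuclideanSpace ℝ (Fin d × Fin d)) pp hδ hpm
  refine ⟨c, hc, fun p hpm_le hle_pp A B => ?_⟩
  rw [finner_Smap_sub_eq_finner_msym_sub, finner_eq_inner_frobVec, frob_eq_norm_frobVec]
  simp only [map_sub, frobVec_Smap, frobVec_Fmap]
  exact hcomp p hpm_le hle_pp _ _

theorem stmt4 (d : ℕ) (hd : 1 ≤ d) (δ pm pp : ℝ) (hδ : 0 ≤ δ) (hpm : 1 < pm)
    (hpmpp : pm ≤ pp) :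
    ∃ c : ℝ, 1 ≤ c ∧ ∀ p : ℝ, pm ≤ p → p ≤ pp → ∀ A B : Matrix (Fin d) (Fin d) ℝ,
      c⁻¹ * frob (Fmap δ p A - Fmap δ p B) ^ 2 ≤
          finner (Smap δ p A - Smap δ p B) (A - B) ∧
      finner (Smap δ p A - Smap δ p B) (A - B) ≤
          c * frob (Fmap δ p A - Fmap δ p B) ^ 2 :=
  stmt4_general d δ pm pp hδ hpm
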